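/- With the setup of the entropy function H on the space Ω of arbitrage-free digital prices matching fixed call prices, the Hessian of H at any D ∈ Ω is symmetric tridiagonal with diagonal entries ∂²H/∂D_i² = −1/p_{i−1} − 1/p_i − (K_i − K̄_{i−1})²/(p_{i−1} c_{i−1}''(β_{i−1})) − (K̄_i − K_i)²/(p_i c_i''(β_i)) and off-diagonal entries ∂²H/∂D_i ∂D_{i+1} = 1/p_i − (K̄_i − K_i)(K_{i+1} − K̄_i)/(p_i c_i''(β_i)). -/

import Mathlib

/-!
Writing `p = E_k - E_{k+1}` and `N = (C_k + K_k E_k) - (C_{k+1} + K_{k+1} E_{k+1})`, the entropy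
is a nearest-neighbour chain sum `H E = ∑ₖ φₖ (E k) (E (k + 1))` with cells
`φₖ = -p log p - p c*ₖ (N / p)`. Hence `∂²H/∂D_i∂D_j` vanishes for `|i - j| ≥ 2`, and every other
entry is a sum of second partials of the (at most two) cells containing `D_i`.

Moving a node with strike `κ` changes `(p, N)` by `±(1, κ)`, so the first partial of a cell is
`∓(log p + 1 + c*(K̄) + c*'(K̄) (κ - K̄))` with `K̄ = N / p`. Differentiating once more, the terms
in `c*'(K̄) dK̄` cancel, leaving `±(1 + c*''(K̄) (κ - K̄) (κ' - K̄)) / p`. As `c*' = (c')⁻¹` near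
`K̄ = c'(β)`, the inverse function theorem gives `c*''(K̄) = 1 / c''(β)`; this needs `c'' > 0`,
which holds because `cᵢ` is the cumulant generating function of Lebesgue measure on `[Kᵢ, Kᵢ₊₁]`
(its second derivative is a variance) and `cₙ b = b Kₙ - log (-b)`. Finally, `K̄ᵢ > Kᵢ` together
with the upper no-arbitrage bound on `D_{i+1}` forces `pᵢ > 0`.
-/

open Real Filter Set Topology MeasureTheory ProbabilityTheory Function

noncomputable def legendreTransform (c : ℝ → ℝ) (I : Set ℝ) (y : ℝ) : ℝ :=
  sSup ((fun b => b * y - c b) '' I)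

section Legendre

variable {c c' c'' : ℝ → ℝ} {I : Set ℝ}

lemma legendreTransform_eq_of_hasDerivAt (hIc : Convex ℝ I)
    (hc : ∀ b ∈ I, HasDerivAt c (c' b) b) (hc' : ∀ b ∈ I, HasDerivAt c' (c'' b) b)
    (hc'' : ∀ b ∈ I, 0 ≤ c'' b) {b : ℝ} (hb : b ∈ I) :
    legendreTransform c I (c' b) = b * c' b - c b := by
  have hconv : ConvexOn ℝ I c :=
    convexOn_of_hasDerivWithinAt2_nonneg hIc
      (fun x hx => (hc x hx).continuousAt.continuousWithinAt)
      (fun x hx => (hc x (interior_subset hx)).hasDerivWithinAt)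
      (fun x hx => (hc' x (interior_subset hx)).hasDerivWithinAt)
      (fun x hx => hc'' x (interior_subset hx))
  refine IsGreatest.csSup_eq ⟨mem_image_of_mem _ hb, ?_⟩
  rintro _ ⟨x, hx, rfl⟩
  -- tangent line inequality `c x ≥ c b + c' b * (x - b)`
  rcases lt_trichotomy x b with hxb | rfl | hbx
  · have := hconv.slope_le_of_hasDerivAt hx hb hxb (hc b hb)
    rw [slope_def_field, div_le_iff₀ (sub_pos.2 hxb)] at this
    dsimp only
    nlinarith
  · exact le_rfl
  · have := hconv.le_slope_of_hasDerivAt hb hx hbx (hc b hb)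
    rw [slope_def_field, le_div_iff₀ (sub_pos.2 hbx)] at this
    dsimp only
    nlinarith

lemma StrictMonoOn.exists_local_rightInverse {f : ℝ → ℝ} (hI : IsOpen I)
    (hf : ContinuousOn f I) (hmono : StrictMonoOn f I) {β : ℝ} (hβ : β ∈ I) :
    ∃ B : ℝ → ℝ, B (f β) = β ∧ ∀ᶠ y in 𝓝 (f β), B y ∈ I ∧ f (B y) = y ∧ ContinuousAt B y := by
  obtain ⟨δ, hδ, hball⟩ := Metric.isOpen_iff.1 hI β hβ
  set J := Ioo (β - δ / 2) (β + δ / 2)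
  have hJI : Icc (β - δ / 2) (β + δ / 2) ⊆ I := fun x hx =>
    hball (by rw [Real.ball_eq_Ioo]; constructor <;> linarith [hx.1, hx.2])
  set U := Ioo (f (β - δ / 2)) (f (β + δ / 2))
  have hsurj : U ⊆ f '' J := by
    intro y hy
    obtain ⟨b, hb, rfl⟩ :=
      intermediate_value_Icc (by linarith) (hf.mono hJI) (Ioo_subset_Icc_self hy)
    refine ⟨b, ⟨?_, ?_⟩, rfl⟩
    · exact lt_of_le_of_ne hb.1 (by rintro rfl; exact hy.1.false)
    · exact lt_of_le_of_ne hb.2 (by rintro rfl; exact hy.2.false)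
  have hmonoJ : StrictMonoOn f J := hmono.mono (Ioo_subset_Icc_self.trans hJI)
  set B := invFunOn f J
  have hBJ : ∀ y ∈ U, B y ∈ J := fun y hy => invFunOn_mem (hsurj hy)
  have hfB : ∀ y ∈ U, f (B y) = y := fun y hy => invFunOn_eq (hsurj hy)
  have hβJ : β ∈ J := ⟨by linarith, by linarith⟩
  have hβU : f β ∈ U := ⟨hmono (hJI ⟨by linarith, by linarith⟩) hβ (by linarith),
    hmono hβ (hJI ⟨by linarith, by linarith⟩) (by linarith)⟩
  have hBf : ∀ b ∈ J, B (f b) = b := fun b hb => hmonoJ.injOn.leftInvOn_invFunOn hb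
  have hBmono : MonotoneOn B U := by
    intro y hy y' hy' hyy'
    by_contra! h
    have := hmonoJ (hBJ y' hy') (hBJ y hy) h
    rw [hfB y hy, hfB y' hy'] at this
    linarith
  refine ⟨B, hBf β hβJ, ?_⟩
  filter_upwards [isOpen_Ioo.mem_nhds hβU] with y hy
  refine ⟨hJI (Ioo_subset_Icc_self (hBJ y hy)), hfB y hy, ?_⟩
  refine continuousAt_of_monotoneOn_of_image_mem_nhds hBmono (isOpen_Ioo.mem_nhds hy) ?_
  refine mem_of_superset (isOpen_Ioo.mem_nhds (hBJ y hy)) fun b hb => ?_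
  exact ⟨f b, ⟨hmono (hJI ⟨le_rfl, by linarith⟩) (hJI (Ioo_subset_Icc_self hb)) hb.1,
    hmono (hJI (Ioo_subset_Icc_self hb)) (hJI ⟨by linarith, le_rfl⟩) hb.2⟩, hBf b hb⟩

theorem legendreTransform_twiceDifferentiableAt (hI : IsOpen I) (hIc : Convex ℝ I)
    (hc : ∀ b ∈ I, HasDerivAt c (c' b) b) (hc' : ∀ b ∈ I, HasDerivAt c' (c'' b) b)
    (hc'' : ∀ b ∈ I, 0 < c'' b) {β : ℝ} (hβ : β ∈ I) :
    (∀ᶠ y in 𝓝 (c' β), DifferentiableAt ℝ (legendreTransform c I) y) ∧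
      HasDerivAt (deriv (legendreTransform c I)) (c'' β)⁻¹ (c' β) := by
  have hmono : StrictMonoOn c' I := by
    refine strictMonoOn_of_deriv_pos hIc (fun x hx => (hc' x hx).continuousAt.continuousWithinAt)
      fun x hx => ?_
    rw [hI.interior_eq] at hx
    exact (hc' x hx).deriv ▸ hc'' x hx
  obtain ⟨B, hBβ, hB⟩ := hmono.exists_local_rightInverse hI
    (fun x hx => (hc' x hx).continuousAt.continuousWithinAt) hβ
  have hBderiv : ∀ᶠ y in 𝓝 (c' β), HasDerivAt B (c'' (B y))⁻¹ y := by
    filter_upwards [hB.eventually_nhds] with y hy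
    exact (hc' _ hy.self_of_nhds.1).of_local_left_inverse hy.self_of_nhds.2.2
      (hc'' _ hy.self_of_nhds.1).ne' (hy.mono fun z hz => hz.2.1)
  have hlegendre : ∀ᶠ y in 𝓝 (c' β), HasDerivAt (legendreTransform c I) (B y) y := by
    filter_upwards [hB.eventually_nhds, hBderiv] with y hy hBy
    -- the envelope `y ↦ B y * y - c (B y)` has derivative `B y` because `c' (B y) = y`
    have henv := (hBy.mul (hasDerivAt_id' y)).sub ((hc _ hy.self_of_nhds.1).comp y hBy)
    rw [hy.self_of_nhds.2.1] at henv
    refine (henv.congr_deriv (by ring)).congr_of_eventuallyEq ?_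
    filter_upwards [hy] with z hz
    have := legendreTransform_eq_of_hasDerivAt hIc hc hc' (fun b hb => (hc'' b hb).le) hz.1
    rwa [hz.2.1] at this
  refine ⟨hlegendre.mono fun y hy => hy.differentiableAt, ?_⟩
  have := hBderiv.self_of_nhds
  rw [hBβ] at this
  refine this.congr_of_eventuallyEq ?_
  filter_upwards [hlegendre] with y hy using hy.deriv

end Legendre

structure ConjugateRegularAt (c g : ℝ → ℝ) (β : ℝ) : Prop where
  deriv_deriv_pos : 0 < deriv (deriv c) β
  eventually_differentiableAt : ∀ᶠ y in 𝓝 (deriv c β), DifferentiableAt ℝ g y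
  hasDerivAt_deriv : HasDerivAt (deriv g) (deriv (deriv c) β)⁻¹ (deriv c β)

section Segment

variable {Ka Kb : ℝ}

lemma cgf_id_restrict_Ioc (hab : Ka ≤ Kb) :
    cgf id (volume.restrict (Ioc Ka Kb)) = fun b => log (∫ x in Ka..Kb, exp (b * x)) := by
  ext b
  rw [cgf, mgf, intervalIntegral.integral_of_le hab]
  rfl

lemma integral_restrict_Ioc_pos (hab : Ka < Kb) {f : ℝ → ℝ} (hf : Continuous f) (m : ℝ)
    (hpos : ∀ x ∈ Ioc Ka Kb, x ≠ m → 0 < f x) : 0 < ∫ x in Ioc Ka Kb, f x := by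
  have hae : ∀ᵐ x ∂volume.restrict (Ioc Ka Kb), 0 < f x := by
    filter_upwards [ae_restrict_mem measurableSet_Ioc,
      ae_restrict_of_ae (compl_mem_ae_iff.2 (measure_singleton m))] with x hx hxm
    exact hpos x hx hxm
  rw [integral_pos_iff_support_of_nonneg_ae (hae.mono fun _ hx => hx.le)
    (hf.integrableOn_Icc.mono_set Ioc_subset_Icc_self)]
  calc (0 : ENNReal) < volume.restrict (Ioc Ka Kb) univ := by simp [hab]
    _ ≤ _ := measure_mono_ae (hae.mono fun x hx _ => hx.ne')

lemma integrableExpSet_id_restrict_Ioc :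
    integrableExpSet id (volume.restrict (Ioc Ka Kb)) = univ :=
  eq_univ_of_forall fun _ =>
    (Continuous.integrableOn_Icc (by fun_prop)).mono_set Ioc_subset_Icc_self

variable (hab : Ka < Kb) (b : ℝ)
include hab

lemma mgf_id_restrict_Ioc_pos : 0 < mgf id (volume.restrict (Ioc Ka Kb)) b :=
  integral_restrict_Ioc_pos hab (by fun_prop) b fun _ _ _ => exp_pos _

lemma lt_deriv_cgf_id_restrict_Ioc : Ka < deriv (cgf id (volume.restrict (Ioc Ka Kb))) b := by
  rw [deriv_cgf (by simp [integrableExpSet_id_restrict_Ioc]),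
    lt_div_iff₀ (mgf_id_restrict_Ioc_pos hab b), ← sub_pos, mgf, ← integral_const_mul,
    ← integral_sub]
  · refine integral_restrict_Ioc_pos hab (by fun_prop) Ka fun x hx _ => ?_
    simpa [← sub_mul] using mul_pos (sub_pos.2 hx.1) (exp_pos (b * x))
  all_goals exact (Continuous.integrableOn_Icc (by fun_prop)).mono_set Ioc_subset_Icc_self

lemma deriv_deriv_cgf_id_restrict_Ioc_pos :
    0 < deriv (deriv (cgf id (volume.restrict (Ioc Ka Kb)))) b := by
  have h := iteratedDeriv_two_cgf_eq_integral (X := id)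
    (μ := volume.restrict (Ioc Ka Kb)) (v := b) (by simp [integrableExpSet_id_restrict_Ioc])
  rw [iteratedDeriv_succ, iteratedDeriv_one] at h
  rw [h]
  exact div_pos (integral_restrict_Ioc_pos hab (by fun_prop) _ fun x _ hx =>
    mul_pos (sq_pos_of_ne_zero (sub_ne_zero.2 hx)) (exp_pos _)) (mgf_id_restrict_Ioc_pos hab b)

theorem conjugateRegularAt_cgf_id_restrict_Ioc :
    ConjugateRegularAt (cgf id (volume.restrict (Ioc Ka Kb)))
      (legendreTransform (cgf id (volume.restrict (Ioc Ka Kb))) univ) b := by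
  set μ := volume.restrict (Ioc Ka Kb)
  have hsmooth : ∀ t, AnalyticAt ℝ (cgf id μ) t := fun t =>
    analyticAt_cgf (by simp [μ, integrableExpSet_id_restrict_Ioc])
  have h := legendreTransform_twiceDifferentiableAt isOpen_univ convex_univ
    (fun t _ => (hsmooth t).differentiableAt.hasDerivAt)
    (fun t _ => (hsmooth t).deriv.differentiableAt.hasDerivAt)
    (fun t _ => deriv_deriv_cgf_id_restrict_Ioc_pos hab t) (mem_univ b)
  exact ⟨deriv_deriv_cgf_id_restrict_Ioc_pos hab b, h.1, h.2⟩

end Segment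

section Tail

variable {c : ℝ → ℝ} {K : ℝ}

lemma hasDerivAt_of_log_exp_div_neg (hc : ∀ b < 0, c b = log (exp (b * K) / -b)) {b : ℝ}
    (hb : b < 0) : HasDerivAt c (K - b⁻¹) b := by
  have hlin : HasDerivAt (fun b => b * K - log (-b)) (K - b⁻¹) b := by
    have := ((hasDerivAt_id' b).mul_const K).sub ((hasDerivAt_neg' b).log (neg_ne_zero.2 hb.ne))
    refine this.congr_deriv ?_
    field_simp
  refine hlin.congr_of_eventuallyEq ?_
  filter_upwards [Iio_mem_nhds hb] with x hx
  rw [hc x hx, log_div (exp_pos _).ne' (neg_ne_zero.2 (ne_of_lt hx)), log_exp]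

lemma hasDerivAt_deriv_of_log_exp_div_neg (hc : ∀ b < 0, c b = log (exp (b * K) / -b)) {b : ℝ}
    (hb : b < 0) : HasDerivAt (deriv c) (b ^ 2)⁻¹ b := by
  have := (hasDerivAt_inv hb.ne).const_sub K
  refine (this.congr_deriv (by ring)).congr_of_eventuallyEq ?_
  filter_upwards [Iio_mem_nhds hb] with x hx using (hasDerivAt_of_log_exp_div_neg hc hx).deriv

theorem conjugateRegularAt_of_log_exp_div_neg (hc : ∀ b < 0, c b = log (exp (b * K) / -b))
    {β : ℝ} (hβ : β < 0) : ConjugateRegularAt c (legendreTransform c (Iio 0)) β := by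
  have h := legendreTransform_twiceDifferentiableAt (c'' := fun b => (b ^ 2)⁻¹) isOpen_Iio
    (convex_Iio 0) (fun b hb => hasDerivAt_of_log_exp_div_neg hc hb)
    (fun b hb => (hasDerivAt_inv (ne_of_lt hb)).const_sub K |>.congr_deriv (by ring))
    (fun b hb => inv_pos.2 (sq_pos_of_ne_zero (ne_of_lt hb))) hβ
  rw [← (hasDerivAt_of_log_exp_div_neg hc hβ).deriv,
    ← (hasDerivAt_deriv_of_log_exp_div_neg hc hβ).deriv] at h
  refine ⟨?_, h.1, h.2⟩
  rw [(hasDerivAt_deriv_of_log_exp_div_neg hc hβ).deriv]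
  exact inv_pos.2 (sq_pos_of_ne_zero (ne_of_lt hβ))

lemma lt_deriv_of_log_exp_div_neg (hc : ∀ b < 0, c b = log (exp (b * K) / -b)) {β : ℝ}
    (hβ : β < 0) : K < deriv c β := by
  rw [(hasDerivAt_of_log_exp_div_neg hc hβ).deriv]
  linarith [inv_lt_zero.2 hβ]

end Tail

structure HasLocalHessian (φ : ℝ → ℝ → ℝ) (x₀ y₀ a b m : ℝ) : Prop where
  eventually_differentiableAt_fst : ∀ᶠ q in 𝓝 (x₀, y₀), DifferentiableAt ℝ (φ · q.2) q.1
  eventually_differentiableAt_snd : ∀ᶠ q in 𝓝 (x₀, y₀), DifferentiableAt ℝ (φ q.1 ·) q.2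
  hasDerivAt_fst_fst : HasDerivAt (deriv (φ · y₀)) a x₀
  hasDerivAt_snd_snd : HasDerivAt (deriv (φ x₀ ·)) b y₀
  hasDerivAt_fst_snd : HasDerivAt (fun y => deriv (φ · y) x₀) m y₀
  hasDerivAt_snd_fst : HasDerivAt (fun x => deriv (φ x ·) y₀) m x₀

lemma hasDerivAt_deriv_add {F G : ℝ → ℝ} {x₀ a b : ℝ}
    (hF : ∀ᶠ x in 𝓝 x₀, DifferentiableAt ℝ F x) (hG : ∀ᶠ x in 𝓝 x₀, DifferentiableAt ℝ G x)
    (hF' : HasDerivAt (deriv F) a x₀) (hG' : HasDerivAt (deriv G) b x₀) :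
    HasDerivAt (deriv fun x => F x + G x) (a + b) x₀ :=
  (hF'.add hG').congr_of_eventuallyEq <| by
    filter_upwards [hF, hG] with x hFx hGx using deriv_add hFx hGx

lemma hasDerivAt_deriv_add_param {F G : ℝ → ℝ → ℝ} {s₀ t₀ a b : ℝ}
    (hF : ∀ᶠ t in 𝓝 t₀, DifferentiableAt ℝ (F · t) s₀)
    (hG : ∀ᶠ t in 𝓝 t₀, DifferentiableAt ℝ (G · t) s₀)
    (hF' : HasDerivAt (fun t => deriv (F · t) s₀) a t₀)
    (hG' : HasDerivAt (fun t => deriv (G · t) s₀) b t₀) :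
    HasDerivAt (fun t => deriv (fun s => F s t + G s t) s₀) (a + b) t₀ :=
  (hF'.add hG').congr_of_eventuallyEq <| by
    filter_upwards [hF, hG] with t hFt hGt using deriv_add hFt hGt

noncomputable def chainSum (n : ℕ) (f : ℕ → ℝ → ℝ → ℝ) (E : ℕ → ℝ) : ℝ :=
  ∑ k ∈ Finset.range (n + 1), f k (E k) (E (k + 1))

section ChainSum

variable {n i j : ℕ} {f : ℕ → ℝ → ℝ → ℝ} {E : ℕ → ℝ} {a b m : ℕ → ℝ}

lemma chainSum_update (hi : 1 ≤ i) (hin : i ≤ n) (s : ℝ) :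
    chainSum n f (update E i s) =
      ∑ k ∈ ((Finset.range (n + 1)).erase i).erase (i - 1), f k (E k) (E (k + 1)) +
        (f (i - 1) (E (i - 1)) s + f i s (E (i + 1))) := by
  have hi' : i - 1 + 1 = i := by omega
  rw [chainSum, ← Finset.sum_erase_add _ _ (Finset.mem_range.2 (by omega : i < n + 1)),
    ← Finset.sum_erase_add _ _ (Finset.mem_erase.2
      ⟨(by omega : i - 1 ≠ i), Finset.mem_range.2 (by omega : i - 1 < n + 1)⟩),
    add_assoc]
  congr 1
  · refine Finset.sum_congr rfl fun k hk => ?_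
    simp only [Finset.mem_erase, Finset.mem_range] at hk
    rw [update_of_ne (by omega), update_of_ne (by omega)]
  · rw [hi', update_self, update_of_ne (by omega), update_of_ne (by omega)]

variable {F : (ℕ → ℝ) → ℝ}
  (hF : ∀ E', E' 0 = E 0 → E' (n + 1) = E (n + 1) → F E' = chainSum n f E')
include hF

lemma deriv_comp_update {E' : ℕ → ℝ} (h0 : E' 0 = E 0) (hlast : E' (n + 1) = E (n + 1))
    (hi : 1 ≤ i) (hin : i ≤ n) :
    deriv (fun s => F (update E' i s)) =
      deriv (fun s => f (i - 1) (E' (i - 1)) s + f i s (E' (i + 1))) := by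
  have : (fun s => F (update E' i s)) = fun s =>
      ∑ k ∈ ((Finset.range (n + 1)).erase i).erase (i - 1), f k (E' k) (E' (k + 1)) +
        (f (i - 1) (E' (i - 1)) s + f i s (E' (i + 1))) := by
    funext s
    rw [← chainSum_update hi hin, hF]
    · rwa [update_of_ne (by omega)]
    · rwa [update_of_ne (by omega)]
  rw [this, deriv_const_add']

lemma deriv_comp_update_update (hi : 1 ≤ i) (hin : i ≤ n) (hj : 1 ≤ j) (hjn : j ≤ n) (t : ℝ) :
    deriv (fun s => F (update (update E j t) i s)) =
      deriv (fun s => f (i - 1) (update E j t (i - 1)) s + f i s (update E j t (i + 1))) :=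
  deriv_comp_update hF (update_of_ne (by omega) _ _) (update_of_ne (by omega) _ _) hi hin

omit hF in
lemma hasLocalHessian_sub_one
    (hcell : ∀ k ≤ n, HasLocalHessian (f k) (E k) (E (k + 1)) (a k) (b k) (m k))
    (hi : 1 ≤ i) (hin : i ≤ n) :
    HasLocalHessian (f (i - 1)) (E (i - 1)) (E i) (a (i - 1)) (b (i - 1)) (m (i - 1)) := by
  simpa [show i - 1 + 1 = i by omega] using hcell (i - 1) (by omega)

theorem hasDerivAt_deriv_comp_update
    (hcell : ∀ k ≤ n, HasLocalHessian (f k) (E k) (E (k + 1)) (a k) (b k) (m k))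
    (hi : 1 ≤ i) (hin : i ≤ n) :
    HasDerivAt (deriv fun s => F (update E i s)) (b (i - 1) + a i) (E i) := by
  rw [deriv_comp_update hF rfl rfl hi hin]
  have h₁ := hasLocalHessian_sub_one hcell hi hin
  have h₂ := hcell i hin
  exact hasDerivAt_deriv_add h₁.eventually_differentiableAt_snd.curry_nhds.self_of_nhds
    (h₂.eventually_differentiableAt_fst.curry_nhds.mono fun _ h => h.self_of_nhds)
    h₁.hasDerivAt_snd_snd h₂.hasDerivAt_fst_fst

theorem hasDerivAt_deriv_comp_update_update_succ
    (hcell : ∀ k ≤ n, HasLocalHessian (f k) (E k) (E (k + 1)) (a k) (b k) (m k))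
    (hi : 1 ≤ i) (hin : i + 1 ≤ n) :
    HasDerivAt (fun t => deriv (fun s => F (update (update E (i + 1) t) i s)) (E i)) (m i)
      (E (i + 1)) := by
  simp only [deriv_comp_update_update hF hi (by omega) (by omega : 1 ≤ i + 1) hin, update_self,
    update_of_ne (by omega : i - 1 ≠ i + 1)]
  have h₁ := hasLocalHessian_sub_one hcell hi (by omega)
  have h₂ := hcell i (by omega)
  simpa using hasDerivAt_deriv_add_param (F := fun s _ => f (i - 1) (E (i - 1)) s)
    (G := fun s t => f i s t) (.of_forall fun _ => h₁.eventually_differentiableAt_snd.self_of_nhds)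
    h₂.eventually_differentiableAt_fst.curry_nhds.self_of_nhds (hasDerivAt_const _ _)
    h₂.hasDerivAt_fst_snd

theorem hasDerivAt_deriv_comp_update_update_pred
    (hcell : ∀ k ≤ n, HasLocalHessian (f k) (E k) (E (k + 1)) (a k) (b k) (m k))
    (hi : 1 ≤ i) (hin : i + 1 ≤ n) :
    HasDerivAt (fun t => deriv (fun s => F (update (update E i t) (i + 1) s)) (E (i + 1))) (m i)
      (E i) := by
  simp only [deriv_comp_update_update hF (by omega : 1 ≤ i + 1) hin hi (by omega),
    Nat.add_sub_cancel, update_self, update_of_ne (by omega : i + 1 + 1 ≠ i)]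
  have h₁ := hcell i (by omega)
  have h₂ := hcell (i + 1) hin
  simpa using hasDerivAt_deriv_add_param (F := fun s t => f i t s)
    (G := fun s _ => f (i + 1) s (E (i + 1 + 1)))
    (h₁.eventually_differentiableAt_snd.curry_nhds.mono fun _ h => h.self_of_nhds)
    (.of_forall fun _ => h₂.eventually_differentiableAt_fst.self_of_nhds)
    h₁.hasDerivAt_snd_fst (hasDerivAt_const _ _)

theorem deriv_deriv_comp_update_update_of_far (hi : 1 ≤ i) (hin : i ≤ n) (hj : 1 ≤ j)
    (hjn : j ≤ n) (hij : i + 1 < j ∨ j + 1 < i) :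
    deriv (fun t => deriv (fun s => F (update (update E j t) i s)) (E i)) (E j) = 0 := by
  simp only [deriv_comp_update_update hF hi hin hj hjn, update_of_ne (by omega : i - 1 ≠ j),
    update_of_ne (by omega : i + 1 ≠ j)]
  exact deriv_const _ _

theorem deriv_deriv_comp_update_update_comm
    (hcell : ∀ k ≤ n, HasLocalHessian (f k) (E k) (E (k + 1)) (a k) (b k) (m k))
    (hi : 1 ≤ i) (hin : i ≤ n) (hj : 1 ≤ j) (hjn : j ≤ n) :
    deriv (fun t => deriv (fun s => F (update (update E j t) i s)) (E i)) (E j) =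
      deriv (fun t => deriv (fun s => F (update (update E i t) j s)) (E j)) (E i) := by
  rcases lt_trichotomy j i with hji | rfl | hij
  · rcases eq_or_lt_of_le (Nat.succ_le_of_lt hji) with rfl | hji'
    · exact (hasDerivAt_deriv_comp_update_update_pred hF hcell hj hin).deriv.trans
        (hasDerivAt_deriv_comp_update_update_succ hF hcell hj hin).deriv.symm
    · rw [deriv_deriv_comp_update_update_of_far hF hi hin hj hjn (.inr hji'),
        deriv_deriv_comp_update_update_of_far hF hj hjn hi hin (.inl hji')]
  · rfl
  · rcases eq_or_lt_of_le (Nat.succ_le_of_lt hij) with rfl | hij'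
    · exact (hasDerivAt_deriv_comp_update_update_succ hF hcell hi hjn).deriv.trans
        (hasDerivAt_deriv_comp_update_update_pred hF hcell hi hjn).deriv.symm
    · rw [deriv_deriv_comp_update_update_of_far hF hi hin hj hjn (.inl hij'),
        deriv_deriv_comp_update_update_of_far hF hj hjn hi hin (.inr hij')]

end ChainSum

section Cell

variable {g u N : ℝ → ℝ} {a s κ κ' g'' Ka Kb Ca Cb x y : ℝ}

lemma hasDerivAt_entropy_comp (hu : HasDerivAt u a s) (hN : HasDerivAt N (a * κ) s)
    (hpos : 0 < u s) (hg : DifferentiableAt ℝ g (N s / u s)) :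
    HasDerivAt (fun s => -(u s * log (u s)) - u s * g (N s / u s))
      (-(a * (log (u s) + 1 + g (N s / u s) + deriv g (N s / u s) * (κ - N s / u s)))) s := by
  have hmean := hN.div hu hpos.ne'
  have := ((hu.mul (hu.log hpos.ne')).neg).sub (hu.mul (hg.hasDerivAt.comp s hmean))
  refine this.congr_deriv ?_
  simp only [comp_apply, Pi.div_apply]
  field_simp
  ring

lemma hasDerivAt_marginal_comp (hu : HasDerivAt u a s) (hN : HasDerivAt N (a * κ) s)
    (hu0 : u s ≠ 0) (hg : DifferentiableAt ℝ g (N s / u s))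
    (hg' : HasDerivAt (deriv g) g'' (N s / u s)) :
    HasDerivAt (fun s => log (u s) + 1 + g (N s / u s) + deriv g (N s / u s) * (κ' - N s / u s))
      (a * (1 + g'' * (κ - N s / u s) * (κ' - N s / u s)) / u s) s := by
  have hmean := hN.div hu hu0
  have := (((hu.log hu0).add_const 1).add (hg.hasDerivAt.comp s hmean)).add
    ((hg'.comp s hmean).mul (hmean.const_sub κ'))
  refine this.congr_deriv ?_
  simp only [comp_apply, Pi.div_apply]
  field_simp
  ring

noncomputable def cellMean (Ka Kb Ca Cb x y : ℝ) : ℝ := ((Ca + Ka * x) - (Cb + Kb * y)) / (x - y)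

noncomputable def cellEntropy (g : ℝ → ℝ) (Ka Kb Ca Cb x y : ℝ) : ℝ :=
  -((x - y) * log (x - y)) - (x - y) * g (cellMean Ka Kb Ca Cb x y)

noncomputable def cellMarginal (g : ℝ → ℝ) (Ka Kb Ca Cb κ x y : ℝ) : ℝ :=
  log (x - y) + 1 + g (cellMean Ka Kb Ca Cb x y) +
    deriv g (cellMean Ka Kb Ca Cb x y) * (κ - cellMean Ka Kb Ca Cb x y)

lemma hasDerivAt_cellNumerator_fst :
    HasDerivAt (fun x => (Ca + Ka * x) - (Cb + Kb * y)) (1 * Ka) x := by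
  simpa using ((hasDerivAt_id x).const_mul Ka).const_add Ca |>.sub_const (Cb + Kb * y)

lemma hasDerivAt_cellNumerator_snd :
    HasDerivAt (fun y => (Ca + Ka * x) - (Cb + Kb * y)) (-1 * Kb) y := by
  simpa using (((hasDerivAt_id y).const_mul Kb).const_add Cb).const_sub (Ca + Ka * x)

lemma cellEntropy_hasDerivAt_fst (hp : 0 < x - y)
    (hg : DifferentiableAt ℝ g (cellMean Ka Kb Ca Cb x y)) :
    HasDerivAt (cellEntropy g Ka Kb Ca Cb · y) (-cellMarginal g Ka Kb Ca Cb Ka x y) x := by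
  have h := hasDerivAt_entropy_comp ((hasDerivAt_id' x).sub_const y)
    hasDerivAt_cellNumerator_fst hp hg
  rw [one_mul] at h
  exact h

lemma cellEntropy_hasDerivAt_snd (hp : 0 < x - y)
    (hg : DifferentiableAt ℝ g (cellMean Ka Kb Ca Cb x y)) :
    HasDerivAt (cellEntropy g Ka Kb Ca Cb x ·) (cellMarginal g Ka Kb Ca Cb Kb x y) y := by
  have h := hasDerivAt_entropy_comp ((hasDerivAt_id' y).const_sub x)
    hasDerivAt_cellNumerator_snd hp hg
  rw [neg_one_mul, neg_neg] at h
  exact h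

lemma cellMarginal_hasDerivAt_fst (hp : x - y ≠ 0)
    (hg : DifferentiableAt ℝ g (cellMean Ka Kb Ca Cb x y))
    (hg' : HasDerivAt (deriv g) g'' (cellMean Ka Kb Ca Cb x y)) :
    HasDerivAt (cellMarginal g Ka Kb Ca Cb κ · y)
      ((1 + g'' * (Ka - cellMean Ka Kb Ca Cb x y) * (κ - cellMean Ka Kb Ca Cb x y)) /
        (x - y)) x := by
  have h := hasDerivAt_marginal_comp (κ' := κ) ((hasDerivAt_id' x).sub_const y)
    hasDerivAt_cellNumerator_fst hp hg hg'
  rw [one_mul] at h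
  exact h

lemma cellMarginal_hasDerivAt_snd (hp : x - y ≠ 0)
    (hg : DifferentiableAt ℝ g (cellMean Ka Kb Ca Cb x y))
    (hg' : HasDerivAt (deriv g) g'' (cellMean Ka Kb Ca Cb x y)) :
    HasDerivAt (cellMarginal g Ka Kb Ca Cb κ x ·)
      (-(1 + g'' * (Kb - cellMean Ka Kb Ca Cb x y) * (κ - cellMean Ka Kb Ca Cb x y)) /
        (x - y)) y := by
  have h := hasDerivAt_marginal_comp (κ' := κ) ((hasDerivAt_id' y).const_sub x)
    hasDerivAt_cellNumerator_snd hp hg hg'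
  rw [neg_one_mul] at h
  exact h

theorem cellEntropy_hasLocalHessian {x₀ y₀ p m σ : ℝ} (hp : x₀ - y₀ = p) (hp0 : 0 < p)
    (hm : cellMean Ka Kb Ca Cb x₀ y₀ = m) (hg : ∀ᶠ y in 𝓝 m, DifferentiableAt ℝ g y)
    (hg' : HasDerivAt (deriv g) σ⁻¹ m) :
    HasLocalHessian (cellEntropy g Ka Kb Ca Cb) x₀ y₀
      (-(1 / p) - (m - Ka) ^ 2 / (p * σ)) (-(1 / p) - (Kb - m) ^ 2 / (p * σ))
      (1 / p - (m - Ka) * (Kb - m) / (p * σ)) := by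
  subst hm
  have hxy : 0 < x₀ - y₀ := hp ▸ hp0
  have hmean : ContinuousAt (fun q : ℝ × ℝ => cellMean Ka Kb Ca Cb q.1 q.2) (x₀, y₀) :=
    ContinuousAt.div (by fun_prop) (by fun_prop) hxy.ne'
  have hgood : ∀ᶠ q : ℝ × ℝ in 𝓝 (x₀, y₀),
      0 < q.1 - q.2 ∧ DifferentiableAt ℝ g (cellMean Ka Kb Ca Cb q.1 q.2) :=
    ((continuous_fst.sub continuous_snd).continuousAt.eventually (eventually_gt_nhds hxy)).and
      (hmean.eventually hg)
  have hfst : ∀ᶠ q : ℝ × ℝ in 𝓝 (x₀, y₀),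
      HasDerivAt (cellEntropy g Ka Kb Ca Cb · q.2) (-cellMarginal g Ka Kb Ca Cb Ka q.1 q.2) q.1 :=
    hgood.mono fun q hq => cellEntropy_hasDerivAt_fst hq.1 hq.2
  have hsnd : ∀ᶠ q : ℝ × ℝ in 𝓝 (x₀, y₀),
      HasDerivAt (cellEntropy g Ka Kb Ca Cb q.1 ·) (cellMarginal g Ka Kb Ca Cb Kb q.1 q.2) q.2 :=
    hgood.mono fun q hq => cellEntropy_hasDerivAt_snd hq.1 hq.2
  have hx : Tendsto (fun x => (x, y₀)) (𝓝 x₀) (𝓝 (x₀, y₀)) :=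
    (continuous_id.prodMk continuous_const).tendsto x₀
  have hy : Tendsto (fun y => (x₀, y)) (𝓝 y₀) (𝓝 (x₀, y₀)) :=
    (continuous_const.prodMk continuous_id).tendsto y₀
  have hg₀ := hg.self_of_nhds
  refine ⟨hfst.mono fun q hq => hq.differentiableAt, hsnd.mono fun q hq => hq.differentiableAt,
    ?_, ?_, ?_, ?_⟩
  · refine (cellMarginal_hasDerivAt_fst (κ := Ka) hxy.ne' hg₀ hg').neg.congr_deriv
      (by rw [hp]; ring) |>.congr_of_eventuallyEq ?_
    filter_upwards [hx.eventually hfst] with x hx using hx.deriv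
  · refine (cellMarginal_hasDerivAt_snd (κ := Kb) hxy.ne' hg₀ hg').congr_deriv
      (by rw [hp]; ring) |>.congr_of_eventuallyEq ?_
    filter_upwards [hy.eventually hsnd] with y hy using hy.deriv
  · refine (cellMarginal_hasDerivAt_snd (κ := Ka) hxy.ne' hg₀ hg').neg.congr_deriv
      (by rw [hp]; ring) |>.congr_of_eventuallyEq ?_
    filter_upwards [hy.eventually hfst] with y hy using hy.deriv
  · refine (cellMarginal_hasDerivAt_fst (κ := Kb) hxy.ne' hg₀ hg').congr_deriv
      (by rw [hp]; ring) |>.congr_of_eventuallyEq ?_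
    filter_upwards [hx.eventually hsnd] with x hx using hx.deriv

-- `cellMean` is `0` when `x = y`, so it is `0 ≤ Ka` that rules out a degenerate cell.
lemma sub_pos_of_lt_cellMean (hKa : 0 ≤ Ka) (hK : Ka < Kb) (hy : y < -((Cb - Ca) / (Kb - Ka)))
    (hmean : Ka < cellMean Ka Kb Ca Cb x y) : 0 < x - y := by
  rw [← neg_div, neg_sub, lt_div_iff₀ (sub_pos.2 hK)] at hy
  have hnum : (Ca + Ka * x) - (Cb + Kb * y) = Ka * (x - y) + (Ca - Cb - (Kb - Ka) * y) := by ring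
  rw [cellMean, hnum] at hmean
  rcases lt_trichotomy (x - y) 0 with hneg | hzero | hpos
  · rw [lt_div_iff_of_neg hneg] at hmean
    linarith
  · rw [hzero, div_zero] at hmean
    linarith
  · exact hpos

end Cell

lemma conjugateRegularAt_cell {n k : ℕ} {K : ℕ → ℝ} {c cstar : ℕ → ℝ → ℝ} {β : ℕ → ℝ}
    (hKmono : ∀ i < n, K i < K (i + 1))
    (hc : ∀ i < n, ∀ b : ℝ, c i b = log (∫ x in K i..K (i + 1), exp (b * x)))
    (hcn : ∀ b : ℝ, b < 0 → c n b = log (exp (b * K n) / (-b)))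
    (hcstar : ∀ i < n, ∀ y : ℝ, cstar i y = sSup (range fun b => b * y - c i b))
    (hcstarn : ∀ y : ℝ, cstar n y = sSup ((fun b => b * y - c n b) '' Iio 0))
    (hβn : β n < 0) (hk : k ≤ n) :
    ConjugateRegularAt (c k) (cstar k) (β k) ∧ K k < deriv (c k) (β k) := by
  rcases hk.lt_or_eq with hk | rfl
  · have hck : c k = cgf id (volume.restrict (Ioc (K k) (K (k + 1)))) := by
      rw [cgf_id_restrict_Ioc (hKmono k hk).le]
      exact funext (hc k hk)
    have hstar : cstar k = legendreTransform (c k) univ := by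
      ext y
      rw [hcstar k hk, legendreTransform, image_univ]
    rw [hstar, hck]
    exact ⟨conjugateRegularAt_cgf_id_restrict_Ioc (hKmono k hk) _,
      lt_deriv_cgf_id_restrict_Ioc (hKmono k hk) _⟩
  · rw [show cstar k = legendreTransform (c k) (Iio 0) from funext hcstarn]
    exact ⟨conjugateRegularAt_of_log_exp_div_neg hcn hβn, lt_deriv_of_log_exp_div_neg hcn hβn⟩

lemma pos_of_noArbitrage {n k : ℕ} {K C D p Kbar : ℕ → ℝ} (hK0 : K 0 = 0)
    (hKmono : ∀ i < n, K i < K (i + 1)) (hDlast : D (n + 1) = 0) (hΩlown : 0 < D n)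
    (hΩup : ∀ i, 1 ≤ i → i ≤ n → D i < -((C i - C (i - 1)) / (K i - K (i - 1))))
    (hp : ∀ i ≤ n, p i = D i - D (i + 1))
    (hKbar : ∀ i ≤ n,
      Kbar i = ((C i + K i * D i) - (C (i + 1) + K (i + 1) * D (i + 1))) / p i)
    (hmean : ∀ i < n, K i < Kbar i) (hk : k ≤ n) : 0 < p k := by
  rcases hk.lt_or_eq with hk | rfl
  · have hK : 0 ≤ K k := hK0 ▸ (strictMonoOn_Iic_of_lt_succ fun m hm => by
      simpa using hKmono m hm).monotoneOn (Nat.zero_le n) hk.le (Nat.zero_le k)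
    rw [hp k hk.le]
    refine sub_pos_of_lt_cellMean hK (hKmono k hk) (by simpa using hΩup (k + 1) (by omega) hk) ?_
    rw [cellMean, ← hp k hk.le, ← hKbar k hk.le]
    exact hmean k hk
  · rw [hp k le_rfl, hDlast, sub_zero]
    exact hΩlown

theorem stmt_11_general (n : ℕ)
    (K : ℕ → ℝ) (hK0 : K 0 = 0) (hKmono : ∀ i < n, K i < K (i + 1))
    (C : ℕ → ℝ)
    (c : ℕ → ℝ → ℝ)
    (hc : ∀ i < n, ∀ b : ℝ, c i b = Real.log (∫ x in K i..K (i + 1), Real.exp (b * x)))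
    (hcn : ∀ b : ℝ, b < 0 → c n b = Real.log (Real.exp (b * K n) / (-b)))
    (cstar : ℕ → ℝ → ℝ)
    (hcstar : ∀ i < n, ∀ y : ℝ, cstar i y = sSup (Set.range fun b => b * y - c i b))
    (hcstarn : ∀ y : ℝ, cstar n y = sSup ((fun b => b * y - c n b) '' Set.Iio 0))
    (H : (ℕ → ℝ) → ℝ)
    (hH : ∀ E : ℕ → ℝ, E 0 = 1 → E (n + 1) = 0 →
      H E = -(∑ i ∈ Finset.range (n + 1),
              (E i - E (i + 1)) * Real.log (E i - E (i + 1))) -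
            ∑ i ∈ Finset.range (n + 1),
              (E i - E (i + 1)) *
                cstar i (((C i + K i * E i) - (C (i + 1) + K (i + 1) * E (i + 1))) /
                  (E i - E (i + 1))))
    (D : ℕ → ℝ) (hD0 : D 0 = 1) (hDlast : D (n + 1) = 0)
    (hΩlown : 0 < D n)
    (hΩup : ∀ i, 1 ≤ i → i ≤ n → D i < -((C i - C (i - 1)) / (K i - K (i - 1))))
    (p Kbar : ℕ → ℝ)
    (hp : ∀ i ≤ n, p i = D i - D (i + 1))
    (hKbar : ∀ i ≤ n,
      Kbar i = ((C i + K i * D i) - (C (i + 1) + K (i + 1) * D (i + 1))) / p i)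
    (β : ℕ → ℝ) (hβ : ∀ i ≤ n, deriv (c i) (β i) = Kbar i) (hβn : β n < 0) :
    -- diagonal entries
    (∀ i, 1 ≤ i → i ≤ n →
      deriv (deriv (fun s => H (Function.update D i s))) (D i) =
        -(1 / p (i - 1)) - 1 / p i -
          (K i - Kbar (i - 1)) ^ 2 / (p (i - 1) * deriv (deriv (c (i - 1))) (β (i - 1))) -
          (Kbar i - K i) ^ 2 / (p i * deriv (deriv (c i)) (β i))) ∧
    -- off-diagonal entries
    (∀ i, 1 ≤ i → i ≤ n - 1 →
      deriv (fun t =>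
          deriv (fun s => H (Function.update (Function.update D (i + 1) t) i s)) (D i))
        (D (i + 1)) =
        1 / p i - (Kbar i - K i) * (K (i + 1) - Kbar i) / (p i * deriv (deriv (c i)) (β i))) ∧
    -- symmetry of the mixed partial derivatives
    (∀ i j, 1 ≤ i → i ≤ n → 1 ≤ j → j ≤ n →
      deriv (fun t =>
          deriv (fun s => H (Function.update (Function.update D j t) i s)) (D i)) (D j) =
      deriv (fun t =>
          deriv (fun s => H (Function.update (Function.update D i t) j s)) (D j)) (D i)) ∧
    -- tridiagonality: entries vanish away from the three central diagonals
    (∀ i j, 1 ≤ i → i + 1 < j → j ≤ n →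
      deriv (fun t =>
          deriv (fun s => H (Function.update (Function.update D j t) i s)) (D i)) (D j) = 0) := by
  have hdual := fun k (hk : k ≤ n) => conjugateRegularAt_cell hKmono hc hcn hcstar hcstarn hβn hk
  have hpos : ∀ k ≤ n, 0 < p k := fun k => pos_of_noArbitrage hK0 hKmono hDlast hΩlown hΩup hp
    hKbar fun i hi => hβ i hi.le ▸ (hdual i hi.le).2
  set Φ := fun k => cellEntropy (cstar k) (K k) (K (k + 1)) (C k) (C (k + 1))
  have hF : ∀ E, E 0 = D 0 → E (n + 1) = D (n + 1) → H E = chainSum n Φ E := by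
    intro E h0 hlast
    rw [hH E (h0.trans hD0) (hlast.trans hDlast), chainSum, ← Finset.sum_neg_distrib,
      ← Finset.sum_sub_distrib]
    rfl
  have hcell : ∀ k ≤ n, HasLocalHessian (Φ k) (D k) (D (k + 1))
      (-(1 / p k) - (Kbar k - K k) ^ 2 / (p k * deriv (deriv (c k)) (β k)))
      (-(1 / p k) - (K (k + 1) - Kbar k) ^ 2 / (p k * deriv (deriv (c k)) (β k)))
      (1 / p k - (Kbar k - K k) * (K (k + 1) - Kbar k) / (p k * deriv (deriv (c k)) (β k))) :=
    fun k hk => cellEntropy_hasLocalHessian (hp k hk).symm (hpos k hk)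
      (by rw [hKbar k hk, hp k hk]; rfl) (hβ k hk ▸ (hdual k hk).1.eventually_differentiableAt)
      (hβ k hk ▸ (hdual k hk).1.hasDerivAt_deriv)
  refine ⟨fun i hi hin => ?_,
    fun i hi hin => (hasDerivAt_deriv_comp_update_update_succ hF hcell hi (by omega)).deriv,
    fun i j hi hin hj hjn => deriv_deriv_comp_update_update_comm hF hcell hi hin hj hjn,
    fun i j hi hij hjn =>
      deriv_deriv_comp_update_update_of_far hF hi (by omega) (by omega) hjn (.inl hij)⟩
  rw [(hasDerivAt_deriv_comp_update hF hcell hi hin).deriv, Nat.sub_add_cancel hi]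
  ring

/-- The Hessian of the entropy `H` with respect to digital prices is symmetric
tridiagonal, with
`∂²H/∂D_i² = -1/p_{i-1} - 1/p_i - (K_i - K̄_{i-1})²/(p_{i-1} c_{i-1}''(β_{i-1}))
  - (K̄_i - K_i)²/(p_i c_i''(β_i))` and
`∂²H/∂D_i∂D_{i+1} = 1/p_i - (K̄_i - K_i)(K_{i+1} - K̄_i)/(p_i c_i''(β_i))`. -/
theorem stmt_11 (n : ℕ) (hn : 1 ≤ n)
    (K : ℕ → ℝ) (hK0 : K 0 = 0) (hKmono : ∀ i < n, K i < K (i + 1))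
    (C : ℕ → ℝ) (hCdec : ∀ i ≤ n, C (i + 1) < C i) (hClast : C (n + 1) = 0)
    (c : ℕ → ℝ → ℝ)
    (hc : ∀ i < n, ∀ b : ℝ, c i b = Real.log (∫ x in K i..K (i + 1), Real.exp (b * x)))
    (hcn : ∀ b : ℝ, b < 0 → c n b = Real.log (Real.exp (b * K n) / (-b)))
    (cstar : ℕ → ℝ → ℝ)
    (hcstar : ∀ i < n, ∀ y : ℝ, cstar i y = sSup (Set.range fun b => b * y - c i b))
    (hcstarn : ∀ y : ℝ, cstar n y = sSup ((fun b => b * y - c n b) '' Set.Iio 0))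
    (H : (ℕ → ℝ) → ℝ)
    (hH : ∀ E : ℕ → ℝ, E 0 = 1 → E (n + 1) = 0 →
      H E = -(∑ i ∈ Finset.range (n + 1),
              (E i - E (i + 1)) * Real.log (E i - E (i + 1))) -
            ∑ i ∈ Finset.range (n + 1),
              (E i - E (i + 1)) *
                cstar i (((C i + K i * E i) - (C (i + 1) + K (i + 1) * E (i + 1))) /
                  (E i - E (i + 1))))
    (D : ℕ → ℝ) (hD0 : D 0 = 1) (hDlast : D (n + 1) = 0)
    (hΩlow : ∀ i, 1 ≤ i → i < n → -((C (i + 1) - C i) / (K (i + 1) - K i)) < D i)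
    (hΩlown : 0 < D n)
    (hΩup : ∀ i, 1 ≤ i → i ≤ n → D i < -((C i - C (i - 1)) / (K i - K (i - 1))))
    (p Kbar : ℕ → ℝ)
    (hp : ∀ i ≤ n, p i = D i - D (i + 1))
    (hKbar : ∀ i ≤ n,
      Kbar i = ((C i + K i * D i) - (C (i + 1) + K (i + 1) * D (i + 1))) / p i)
    (β : ℕ → ℝ) (hβ : ∀ i ≤ n, deriv (c i) (β i) = Kbar i) (hβn : β n < 0) :
    -- diagonal entries
    (∀ i, 1 ≤ i → i ≤ n →
      deriv (deriv (fun s => H (Function.update D i s))) (D i) =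
        -(1 / p (i - 1)) - 1 / p i -
          (K i - Kbar (i - 1)) ^ 2 / (p (i - 1) * deriv (deriv (c (i - 1))) (β (i - 1))) -
          (Kbar i - K i) ^ 2 / (p i * deriv (deriv (c i)) (β i))) ∧
    -- off-diagonal entries
    (∀ i, 1 ≤ i → i ≤ n - 1 →
      deriv (fun t =>
          deriv (fun s => H (Function.update (Function.update D (i + 1) t) i s)) (D i))
        (D (i + 1)) =
        1 / p i - (Kbar i - K i) * (K (i + 1) - Kbar i) / (p i * deriv (deriv (c i)) (β i))) ∧
    -- symmetry of the mixed partial derivatives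
    (∀ i j, 1 ≤ i → i ≤ n → 1 ≤ j → j ≤ n →
      deriv (fun t =>
          deriv (fun s => H (Function.update (Function.update D j t) i s)) (D i)) (D j) =
      deriv (fun t =>
          deriv (fun s => H (Function.update (Function.update D i t) j s)) (D j)) (D i)) ∧
    -- tridiagonality: entries vanish away from the three central diagonals
    (∀ i j, 1 ≤ i → i + 1 < j → j ≤ n →
      deriv (fun t =>
          deriv (fun s => H (Function.update (Function.update D j t) i s)) (D i)) (D j) = 0) :=
  stmt_11_general n K hK0 hKmono C c hc hcn cstar hcstar hcstarn H hH D hD0 hDlast hΩlown hΩup p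
    Kbar hp hKbar β hβ hβn
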